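/- arXiv:2308.06356 — 2 statements merged into one kernel-verified Lean document; each statement's English description precedes it below -/
import Mathlib

section
/- Uniqueness on the Aubry set: if u and v are respectively a weak KAM solution (u = T⁻u + c₀, continuous) and a c₀-subsolution with u ≥ v on the projected Aubry set 𝒜, then u ≥ v on all of X. Consequently, two weak KAM solutions that coincide on 𝒜 coincide everywhere. -/
/-!
Follow a calibrating sequence `x = x₀, x₋₁, x₋₂, …` of `u` backwards. The subsolution inequality
for `v` on each step, compared with the calibration identity of `u`, shows that `u - v` decreases
along it. If `x₋ₙ₋₁ → z` along a subsequence, applying the subsolution inequality to the step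
`z → x₋ₙ` instead gives `(u - v)(x) ≥ u(x₋ₙ₋₁) + c(x₋ₙ₋₁, x₋ₙ) - c(z, x₋ₙ) - v(z) → (u - v)(z)`,
using that `c(w, ·) → c(z, ·)` uniformly as `w → z`. Finally `z ∈ 𝒜`: the segment of the sequence
between two such visits, with both ends moved to `z`, is a closed chain at `z` of arbitrarily large
length `n` and cost within `ε` of `-n c₀`.
-/

/-- The (negative) Lax–Oleinik operator. -/
noncomputable def Tminus {X : Type*} (c : X × X → ℝ) (f : X → ℝ) : X → ℝ :=
  fun x => ⨅ y, (f y + c (y, x))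

/-- The minimal cost `c_n(x,y)` over chains of length `n` from `x` to `y`. -/
noncomputable def chainCost {X : Type*} (c : X × X → ℝ) (n : ℕ) (x y : X) : ℝ :=
  ⨅ p : {q : ℕ → X // q 0 = x ∧ q n = y},
    ∑ i ∈ Finset.range n, c (p.1 i, p.1 (i + 1))

/-- The Peierls barrier. -/
noncomputable def peierls {X : Type*} (c : X × X → ℝ) (c₀ : ℝ) (x y : X) : ℝ :=
  Filter.liminf (fun n : ℕ => chainCost c n x y + n * c₀) Filter.atTop

/-- The projected Aubry set. -/
def aubry {X : Type*} (c : X × X → ℝ) (c₀ : ℝ) : Set X :=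
  {x | peierls c c₀ x x = 0}

open Filter Finset Function Topology

section Chains

variable {X : Type*} {c : X × X → ℝ} {c₀ : ℝ}

def IsSubsolution (c : X × X → ℝ) (c₀ : ℝ) (v : X → ℝ) : Prop :=
  ∀ x y, v y - v x ≤ c (x, y) + c₀

/-- `a` runs backwards in time: `a (n + 1)` is the point `x₋ₙ₋₁` preceding `a n = x₋ₙ`. -/
def IsCalibrating (c : X × X → ℝ) (c₀ : ℝ) (u : X → ℝ) (a : ℕ → X) : Prop :=
  ∀ n, u (a n) = u (a (n + 1)) + c (a (n + 1), a n) + c₀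

lemma sum_range_update_ends {α M : Type*} [AddCommGroup M] (f : α → α → M) (r : ℕ → α)
    (j : ℕ) (x y : α) :
    ∑ i ∈ range (j + 2),
        f (update (update r 0 x) (j + 2) y i) (update (update r 0 x) (j + 2) y (i + 1)) =
      ∑ i ∈ range (j + 2), f (r i) (r (i + 1)) + (f x (r 1) - f (r 0) (r 1)) +
        (f (r (j + 1)) y - f (r (j + 1)) (r (j + 2))) := by
  have hmid : ∀ i ∈ range j,
      f (update (update r 0 x) (j + 2) y (i + 1)) (update (update r 0 x) (j + 2) y (i + 1 + 1)) =
        f (r (i + 1)) (r (i + 1 + 1)) := fun i hi => by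
    have := mem_range.mp hi
    rw [update_of_ne (by omega), update_of_ne (by omega), update_of_ne (by omega),
      update_of_ne (by omega)]
  have h0 : update (update r 0 x) (j + 2) y 0 = x := by
    rw [update_of_ne (by omega), update_self]
  have h1 : update (update r 0 x) (j + 2) y 1 = r 1 := by
    rw [update_of_ne (by omega), update_of_ne (by omega)]
  have hlast : update (update r 0 x) (j + 2) y (j + 1) = r (j + 1) := by
    rw [update_of_ne (by omega), update_of_ne (by omega)]
  rw [sum_range_succ _ (j + 1), sum_range_succ' _ j, sum_congr rfl hmid, h0, h1, hlast,
    update_self, sum_range_succ _ (j + 1), sum_range_succ' _ j]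
  abel

lemma IsSubsolution.sub_le_sum_add {v : X → ℝ} (hv : IsSubsolution c c₀ v) (q : ℕ → X)
    (n : ℕ) : v (q n) - v (q 0) ≤ ∑ i ∈ range n, c (q i, q (i + 1)) + n * c₀ := by
  calc v (q n) - v (q 0) = ∑ i ∈ range n, (v (q (i + 1)) - v (q i)) :=
        (sum_range_sub (v ∘ q) n).symm
    _ ≤ ∑ i ∈ range n, (c (q i, q (i + 1)) + c₀) := sum_le_sum fun i _ => hv _ _
    _ = _ := by rw [sum_add_distrib, sum_const, card_range, nsmul_eq_mul]

lemma IsSubsolution.chainCost_self_add_nonneg {v : X → ℝ} (hv : IsSubsolution c c₀ v)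
    (n : ℕ) (x : X) : 0 ≤ chainCost c n x x + n * c₀ := by
  have : Nonempty {q : ℕ → X // q 0 = x ∧ q n = x} := ⟨⟨fun _ => x, rfl, rfl⟩⟩
  have : -(n * c₀) ≤ chainCost c n x x := le_ciInf fun ⟨q, hq0, hqn⟩ => by
    have := hv.sub_le_sum_add q n
    rw [hq0, hqn, sub_self] at this
    linarith
  linarith

lemma chainCost_le_sum (hc : BddBelow (Set.range c)) (q : ℕ → X) (n : ℕ) :
    chainCost c n (q 0) (q n) ≤ ∑ i ∈ range n, c (q i, q (i + 1)) := by
  obtain ⟨m, hm⟩ := hc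
  refine ciInf_le ?_ (⟨q, rfl, rfl⟩ : {p : ℕ → X // p 0 = q 0 ∧ p n = q n})
  refine ⟨n • m, ?_⟩
  rintro _ ⟨p, rfl⟩
  simpa using card_nsmul_le_sum (range n) _ m fun i _ => hm ⟨_, rfl⟩

variable {u : X → ℝ} {a : ℕ → X}

lemma IsCalibrating.sum_add_eq (ha : IsCalibrating c c₀ u a) {m N : ℕ} (hmN : m ≤ N) :
    ∑ i ∈ range m, c (a (N - i), a (N - (i + 1))) + m * c₀ = u (a (N - m)) - u (a N) := by
  have hstep : ∀ i ∈ range m, c (a (N - i), a (N - (i + 1))) + c₀ =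
      u (a (N - (i + 1))) - u (a (N - i)) := fun i hi => by
    have := ha (N - (i + 1))
    rw [show N - (i + 1) + 1 = N - i by have := mem_range.mp hi; omega] at this
    linarith
  have htel := sum_range_sub (fun i => u (a (N - i))) m
  rw [← sum_congr rfl hstep, sum_add_distrib, sum_const, card_range, nsmul_eq_mul,
    Nat.sub_zero] at htel
  exact htel

/-- The closed chain runs backwards along the calibrating sequence from `a n` to `a K`, with
both ends moved to `z`. -/
lemma IsCalibrating.chainCost_add_le (hc : BddBelow (Set.range c))
    (ha : IsCalibrating c c₀ u a) (z : X) {K m n : ℕ} (hm : 2 ≤ m) (hKmn : K + m = n + 1) :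
    chainCost c m z z + m * c₀ ≤ u (a K) - u (a (n + 1)) +
      (c (z, a n) - c (a (n + 1), a n)) + (c (a (K + 1), z) - c (a (K + 1), a K)) := by
  obtain ⟨j, rfl⟩ : ∃ j, m = j + 2 := ⟨m - 2, by omega⟩
  set r : ℕ → X := fun i => a (n + 1 - i)
  have hcost := chainCost_le_sum hc (update (update r 0 z) (j + 2) z) (j + 2)
  simp only [update_self, update_of_ne (by omega : 0 ≠ j + 2)] at hcost
  rw [sum_range_update_ends (fun x y => c (x, y))] at hcost
  have hsum := ha.sum_add_eq (m := j + 2) (N := n + 1) (by omega)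
  have h1 : n + 1 - 1 = n := rfl
  have h2 : n + 1 - (j + 1) = K + 1 := by omega
  have h3 : n + 1 - (j + 2) = K := by omega
  simp only [r, h1, h2, h3, Nat.sub_zero, Nat.add_sub_add_right] at hcost hsum ⊢
  push_cast at hsum ⊢
  linarith

end Chains

lemma tendsto_sub_of_continuous_uncurry {X Y ι : Type*} [TopologicalSpace X]
    [TopologicalSpace Y] [CompactSpace Y] {F : X → Y → ℝ}
    (hF : Continuous fun p : X × Y => F p.1 p.2) {l : Filter ι} {w : ι → X} {z : X}
    (hw : Tendsto w l (𝓝 z)) (y : ι → Y) :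
    Tendsto (fun i => F (w i) (y i) - F z (y i)) l (𝓝 0) := by
  refine Metric.tendsto_nhds.mpr fun ε hε => ?_
  have hG : Continuous fun p : X × Y => F p.1 p.2 - F z p.2 := by fun_prop
  have hnear : ∀ᶠ w in 𝓝 z, ∀ y ∈ Set.univ, dist (F w y - F z y) 0 < ε :=
    isCompact_univ.eventually_forall_of_forall_eventually fun y _ => by
      simpa [Metric.mem_ball] using (hG.tendsto (z, y)).eventually (Metric.ball_mem_nhds _ hε)
  filter_upwards [hw.eventually hnear] with i hi using hi (y i) trivial

lemma liminf_eq_zero_of_nonneg_of_frequently_le {f : ℕ → ℝ} (h0 : ∀ n, 0 ≤ f n)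
    (hf : ∀ ε > 0, ∃ᶠ n in atTop, f n ≤ ε) : liminf f atTop = 0 := by
  refine le_antisymm (le_of_forall_pos_le_add fun ε hε => ?_) ?_
  · simpa using liminf_le_of_frequently_le (hf ε hε) (isBoundedUnder_of ⟨0, h0⟩)
  · exact le_liminf_of_le (IsCoboundedUnder.of_frequently_le (hf 1 one_pos))
      (Eventually.of_forall h0)

section Compact

variable {X : Type*} [TopologicalSpace X] [CompactSpace X] {c : X × X → ℝ} {c₀ : ℝ}
  {u v : X → ℝ} {a : ℕ → X}

lemma isLeast_Tminus (hc : Continuous c) (hu : Continuous u) (x : X) :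
    IsLeast (Set.range fun y => u y + c (y, x)) (Tminus c u x) :=
  have : Nonempty X := ⟨x⟩
  (isCompact_range (by fun_prop)).isLeast_sInf (Set.range_nonempty _)

lemma isSubsolution_of_eq_Tminus (hc : Continuous c) (hu : Continuous u)
    (hwk : ∀ x, u x = Tminus c u x + c₀) : IsSubsolution c c₀ u := fun x y => by
  have := (isLeast_Tminus hc hu y).2 ⟨x, rfl⟩
  linarith [hwk y]

lemma exists_isCalibrating (hc : Continuous c) (hu : Continuous u)
    (hwk : ∀ x, u x = Tminus c u x + c₀) (x : X) : ∃ a, a 0 = x ∧ IsCalibrating c c₀ u a := by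
  have hpred : ∀ w, ∃ y, u w = u y + c (y, w) + c₀ := fun w => by
    obtain ⟨y, hy⟩ := (isLeast_Tminus hc hu w).1
    exact ⟨y, by rw [hwk w, ← hy]⟩
  choose s hs using hpred
  exact ⟨fun n => s^[n] x, rfl, fun n => by simpa only [iterate_succ_apply'] using hs _⟩

lemma IsCalibrating.frequently_chainCost_add_le (hc : Continuous c) (hu : Continuous u)
    (ha : IsCalibrating c c₀ u a) {φ : ℕ → ℕ} (hφ : StrictMono φ) {z : X}
    (hz : Tendsto (fun k => a (φ k + 1)) atTop (𝓝 z)) :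
    ∀ ε > 0, ∃ᶠ m in atTop, chainCost c m z z + m * c₀ ≤ ε := by
  intro ε hε
  have small : ∀ {g : ℕ → ℝ}, Tendsto g atTop (𝓝 0) → ∀ᶠ k in atTop, |g k| < ε / 4 :=
    fun hg => by simpa only [Real.dist_0_eq_abs] using Metric.tendsto_nhds.mp hg _ (by positivity)
  have hval := small (tendsto_sub_nhds_zero_iff.mpr ((hu.tendsto z).comp hz))
  have hstart := small (tendsto_sub_of_continuous_uncurry (F := fun w y => c (w, y))
    (by fun_prop) hz (fun k => a (φ k)))
  have hend := small (tendsto_sub_of_continuous_uncurry (F := fun w y => c (y, w))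
    (by fun_prop) hz (fun k => a (φ k + 1 + 1)))
  obtain ⟨k₀, hk₀⟩ := eventually_atTop.mp (hval.and (hstart.and hend))
  refine frequently_atTop.mpr fun M => ?_
  have hφM := hφ.add_le_nat (M + 2) k₀
  refine ⟨φ (M + 2 + k₀) - φ k₀, by omega, ?_⟩
  have hchain := ha.chainCost_add_le (isCompact_range hc).bddBelow z (K := φ k₀ + 1)
    (m := φ (M + 2 + k₀) - φ k₀) (n := φ (M + 2 + k₀)) (by omega) (by omega)
  obtain ⟨hvalK, -, hendK⟩ := hk₀ k₀ le_rfl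
  obtain ⟨hvalN, hstartN, -⟩ := hk₀ (M + 2 + k₀) (by omega)
  simp only [comp_apply] at hvalK hvalN
  rw [abs_lt] at hvalK hvalN hstartN hendK
  linarith

lemma IsCalibrating.mem_aubry (hc : Continuous c) (hu : Continuous u)
    (hwk : ∀ x, u x = Tminus c u x + c₀) (ha : IsCalibrating c c₀ u a) {φ : ℕ → ℕ}
    (hφ : StrictMono φ) {z : X} (hz : Tendsto (fun k => a (φ k + 1)) atTop (𝓝 z)) :
    z ∈ aubry c c₀ :=
  liminf_eq_zero_of_nonneg_of_frequently_le
    (fun n => (isSubsolution_of_eq_Tminus hc hu hwk).chainCost_self_add_nonneg n z)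
    (ha.frequently_chainCost_add_le hc hu hφ hz)

lemma IsCalibrating.sub_le_sub_of_tendsto (hc : Continuous c) (hu : Continuous u)
    (hv : IsSubsolution c c₀ v) (ha : IsCalibrating c c₀ u a) {φ : ℕ → ℕ} {z : X}
    (hz : Tendsto (fun k => a (φ k + 1)) atTop (𝓝 z)) : u z - v z ≤ u (a 0) - v (a 0) := by
  have hanti : Antitone fun n => u (a n) - v (a n) := antitone_nat_of_succ_le fun n => by
    linarith [hv (a (n + 1)) (a n), ha n]
  have hlow : ∀ k, u (a (φ k + 1)) + (c (a (φ k + 1), a (φ k)) - c (z, a (φ k))) - v z ≤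
      u (a 0) - v (a 0) := fun k => by
    linarith [hv z (a (φ k)), ha (φ k), hanti (Nat.zero_le (φ k))]
  have hlim := (((hu.tendsto z).comp hz).add (tendsto_sub_of_continuous_uncurry
    (F := fun w y => c (w, y)) (by fun_prop) hz (fun k => a (φ k)))).sub_const (v z)
  simpa using le_of_tendsto' hlim hlow

theorem IsSubsolution.le_of_eq_Tminus [FirstCountableTopology X] (hc : Continuous c)
    (hu : Continuous u) (hwk : ∀ x, u x = Tminus c u x + c₀) (hv : IsSubsolution c c₀ v)
    (hA : ∀ x ∈ aubry c c₀, v x ≤ u x) (x : X) : v x ≤ u x := by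
  obtain ⟨a, rfl, ha⟩ := exists_isCalibrating hc hu hwk x
  obtain ⟨z, φ, hφ, hz⟩ := CompactSpace.tendsto_subseq fun n => a (n + 1)
  have hzA := ha.mem_aubry hc hu hwk hφ hz
  linarith [ha.sub_le_sub_of_tendsto hc hu hv hz, hA z hzA]

end Compact

theorem stmt15_general {X : Type*} [MetricSpace X] [CompactSpace X]
    (c : X × X → ℝ) (hc : Continuous c) (c₀ : ℝ) :
    (∀ u v : X → ℝ, Continuous u → (∀ x, u x = Tminus c u x + c₀) →
        (∀ x y : X, v y - v x ≤ c (x, y) + c₀) →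
        (∀ x ∈ aubry c c₀, v x ≤ u x) → ∀ x : X, v x ≤ u x) ∧
    (∀ u v : X → ℝ, Continuous u → Continuous v →
        (∀ x, u x = Tminus c u x + c₀) → (∀ x, v x = Tminus c v x + c₀) →
        (∀ x ∈ aubry c c₀, u x = v x) → u = v) :=
  ⟨fun _ _ hu hwk hv hA => IsSubsolution.le_of_eq_Tminus hc hu hwk hv hA,
    fun _ _ hu hv hwku hwkv hA => funext fun x => le_antisymm
      ((isSubsolution_of_eq_Tminus hc hu hwku).le_of_eq_Tminus hc hv hwkv
        (fun y hy => (hA y hy).le) x)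
      ((isSubsolution_of_eq_Tminus hc hv hwkv).le_of_eq_Tminus hc hu hwku
        (fun y hy => (hA y hy).ge) x)⟩

theorem stmt15 {X : Type*} [MetricSpace X] [CompactSpace X] [Nonempty X]
    (c : X × X → ℝ) (hc : Continuous c) (c₀ : ℝ) :
    (∀ u v : X → ℝ, Continuous u → (∀ x, u x = Tminus c u x + c₀) →
        (∀ x y : X, v y - v x ≤ c (x, y) + c₀) →
        (∀ x ∈ aubry c c₀, v x ≤ u x) → ∀ x : X, v x ≤ u x) ∧
    (∀ u v : X → ℝ, Continuous u → Continuous v →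
        (∀ x, u x = Tminus c u x + c₀) → (∀ x, v x = Tminus c v x + c₀) →
        (∀ x ∈ aubry c c₀, u x = v x) → u = v) :=
  stmt15_general c hc c₀
end

section
/- Extension from the Aubry set: if f : 𝒜 → ℝ satisfies f(y) − f(x) ≤ h(x,y) for all x, y ∈ 𝒜, then u(x) := inf_{y ∈ 𝒜} (f(y) + h(y,x)) defines a weak KAM solution (u = T⁻u + c₀) with u = f on 𝒜. -/
/-!
A bounded critical solution `w` turns the Peierls barrier into a genuine liminf of bounded
sequences (for an unbounded real sequence `liminf` is a junk value): the chain action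
`c_n(x, y) + n c₀` is at least `w y - w x`, and at most a constant because every point reaches
`y` by one step followed by an almost calibrated backward chain of `w` ending at `y`.

A function is a weak KAM solution iff it is dominated and calibrated, a property stable under
adding constants and under bounded-below infima. Each `h(y, ·)` is dominated (append a step to a
chain) and calibrated: split the last step off almost optimal chains and pass to a cluster point
of the penultimate points, the chain costs being equicontinuous in the endpoint. Hence `u` is a
weak KAM solution, and on `𝒜` the relations `h(x, x) = 0` and `f y - f x ≤ h(y, x)` give `u = f`.
-/

open Filter Set Topology

section Chains

variable {X : Type*} {c : X × X → ℝ} {c₀ : ℝ}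

def chainSum (c : X × X → ℝ) (q : ℕ → X) (n : ℕ) : ℝ :=
  ∑ i ∈ Finset.range n, c (q i, q (i + 1))

@[simp]
theorem chainSum_zero (q : ℕ → X) : chainSum c q 0 = 0 := rfl

theorem chainSum_succ (q : ℕ → X) (n : ℕ) :
    chainSum c q (n + 1) = chainSum c q n + c (q n, q (n + 1)) :=
  Finset.sum_range_succ _ _

-- For `x ≠ y` there is no chain of length `0`, and `⨅` over an empty type is `0`.
theorem chainCost_zero (c : X × X → ℝ) (x y : X) : chainCost c 0 x y = 0 := by
  simp [chainCost]

theorem nonempty_chain {n : ℕ} (hn : n ≠ 0) (x y : X) :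
    Nonempty {q : ℕ → X // q 0 = x ∧ q n = y} :=
  ⟨⟨fun i => if i = 0 then x else y, by simp, by simp [hn]⟩⟩

theorem bddBelow_range_chainSum (hc : BddBelow (range c)) (n : ℕ) (x y : X) :
    BddBelow (range fun p : {q : ℕ → X // q 0 = x ∧ q n = y} => chainSum c p.1 n) := by
  obtain ⟨K, hK⟩ := hc
  refine ⟨n * K, ?_⟩
  rintro _ ⟨p, rfl⟩
  calc (n : ℝ) * K = ∑ _i ∈ Finset.range n, K := by simp
    _ ≤ chainSum c p.1 n := Finset.sum_le_sum fun i _ => hK (mem_range_self _)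

theorem chainCost_le_chainSum (hc : BddBelow (range c)) {q : ℕ → X} {n : ℕ} {x y : X}
    (h0 : q 0 = x) (hn : q n = y) : chainCost c n x y ≤ chainSum c q n :=
  ciInf_le (bddBelow_range_chainSum hc n x y) ⟨q, h0, hn⟩

theorem le_add_chainSum {w : X → ℝ} (hw : ∀ z x, w x ≤ w z + c (z, x) + c₀) (q : ℕ → X)
    (n : ℕ) : w (q n) ≤ w (q 0) + chainSum c q n + n * c₀ := by
  induction n with
  | zero => simp
  | succ n ih =>
    rw [chainSum_succ]
    push_cast
    linarith [hw (q n) (q (n + 1))]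

theorem sub_le_chainCost {w : X → ℝ} (hw : ∀ z x, w x ≤ w z + c (z, x) + c₀) {n : ℕ}
    (hn : n ≠ 0) (x y : X) : w y - w x - n * c₀ ≤ chainCost c n x y := by
  have := nonempty_chain hn x y
  refine le_ciInf fun p => ?_
  have h := le_add_chainSum hw p.1 n
  rw [p.2.1, p.2.2] at h
  change _ ≤ chainSum c p.1 n
  linarith

theorem chainCost_succ_le_chainSum_add (hc : BddBelow (range c)) {q : ℕ → X} {n : ℕ}
    {x y : X} (h0 : q 0 = x) (hn : q n = y) (z : X) :
    chainCost c (n + 1) x z ≤ chainSum c q n + c (y, z) := by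
  have hsum : chainSum c (Function.update q (n + 1) z) n = chainSum c q n :=
    Finset.sum_congr rfl fun i hi => by
      rw [Finset.mem_range] at hi
      rw [Function.update_of_ne (by omega), Function.update_of_ne (by omega)]
  calc chainCost c (n + 1) x z ≤ chainSum c (Function.update q (n + 1) z) (n + 1) :=
        chainCost_le_chainSum hc (by simp [h0]) (by simp)
    _ = chainSum c q n + c (y, z) := by
        rw [chainSum_succ, hsum, Function.update_self, Function.update_of_ne (by omega), hn]

theorem chainCost_succ_le (hc : BddBelow (range c)) {n : ℕ} (hn : n ≠ 0) (x y z : X) :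
    chainCost c (n + 1) x z ≤ chainCost c n x y + c (y, z) := by
  have := nonempty_chain hn x y
  have h : chainCost c (n + 1) x z - c (y, z) ≤ chainCost c n x y :=
    le_ciInf fun p => by
      change _ ≤ chainSum c p.1 n
      linarith [chainCost_succ_le_chainSum_add hc p.2.1 p.2.2 z]
  linarith

theorem chainCost_succ_le_of_forall_le_add (hc : BddBelow (range c)) {z z' : X} {ε : ℝ}
    (h : ∀ p, c (p, z') ≤ c (p, z) + ε) (n : ℕ) (x : X) :
    chainCost c (n + 1) x z' ≤ chainCost c (n + 1) x z + ε := by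
  have := nonempty_chain n.succ_ne_zero x z
  have key : chainCost c (n + 1) x z' - ε ≤ chainCost c (n + 1) x z := le_ciInf fun p => by
    have h1 := chainCost_succ_le_chainSum_add hc (q := p.1) (n := n) p.2.1 rfl z'
    have h2 : chainSum c p.1 (n + 1) = chainSum c p.1 n + c (p.1 n, z) := by
      rw [chainSum_succ, p.2.2]
    change _ ≤ chainSum c p.1 (n + 1)
    linarith [h (p.1 n)]
  linarith

theorem exists_chainCost_add_lt_chainCost_succ (hc : BddBelow (range c)) (n : ℕ) (x y : X)
    {ε : ℝ} (hε : 0 < ε) : ∃ z, chainCost c n x z + c (z, y) < chainCost c (n + 1) x y + ε := by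
  have := nonempty_chain n.succ_ne_zero x y
  obtain ⟨p, hp⟩ := exists_lt_of_ciInf_lt (lt_add_of_pos_right (chainCost c (n + 1) x y) hε)
  refine ⟨p.1 n, ?_⟩
  have h := chainCost_le_chainSum hc (q := p.1) (n := n) p.2.1 rfl
  change chainSum c p.1 (n + 1) < _ at hp
  rw [chainSum_succ, p.2.2] at hp
  linarith

end Chains

section WeakKAM

variable {X : Type*} {c : X × X → ℝ} {c₀ : ℝ}

def IsWeakKAM (c : X × X → ℝ) (c₀ : ℝ) (u : X → ℝ) : Prop :=
  ∀ x, u x = Tminus c u x + c₀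

theorem bddBelow_range_add_cost {v : X → ℝ} (hv : BddBelow (range v))
    (hc : BddBelow (range c)) (x : X) : BddBelow (range fun z => v z + c (z, x)) := by
  obtain ⟨a, ha⟩ := hv
  obtain ⟨b, hb⟩ := hc
  refine ⟨a + b, ?_⟩
  rintro _ ⟨z, rfl⟩
  exact add_le_add (ha (mem_range_self z)) (hb (mem_range_self _))

theorem isWeakKAM_iff {v : X → ℝ} (hv : BddBelow (range v)) (hc : BddBelow (range c)) :
    IsWeakKAM c c₀ v ↔ (∀ z x, v x ≤ v z + c (z, x) + c₀) ∧
      ∀ x, ∀ ε > 0, ∃ z, v z + c (z, x) + c₀ < v x + ε := by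
  constructor
  · intro h
    refine ⟨fun z x => ?_, fun x ε hε => ?_⟩
    · have : Tminus c v x ≤ v z + c (z, x) := ciInf_le (bddBelow_range_add_cost hv hc x) z
      linarith [h x]
    · have : Nonempty X := ⟨x⟩
      obtain ⟨z, hz⟩ := exists_lt_of_ciInf_lt (lt_add_of_pos_right (Tminus c v x) hε)
      exact ⟨z, by linarith [h x]⟩
  · rintro ⟨hdom, hcal⟩ x
    have : Nonempty X := ⟨x⟩
    refine le_antisymm ?_ (le_of_forall_pos_lt_add fun ε hε => ?_)
    · have : v x - c₀ ≤ Tminus c v x := le_ciInf fun z => by linarith [hdom z x]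
      linarith
    · obtain ⟨z, hz⟩ := hcal x ε hε
      have : Tminus c v x ≤ v z + c (z, x) := ciInf_le (bddBelow_range_add_cost hv hc x) z
      linarith

theorem IsWeakKAM.const_add {v : X → ℝ} (hv : IsWeakKAM c c₀ v) (hvb : BddBelow (range v))
    (hc : BddBelow (range c)) (a : ℝ) : IsWeakKAM c c₀ (fun x => a + v x) := by
  obtain ⟨hdom, hcal⟩ := (isWeakKAM_iff hvb hc).1 hv
  obtain ⟨b, hb⟩ := hvb
  refine (isWeakKAM_iff ⟨a + b, ?_⟩ hc).2 ⟨fun z x => by linarith [hdom z x], fun x ε hε => ?_⟩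
  · rintro _ ⟨x, rfl⟩
    linarith [hb (mem_range_self x)]
  · obtain ⟨z, hz⟩ := hcal x ε hε
    exact ⟨z, by linarith⟩

theorem isWeakKAM_iInf {ι : Type*} [Nonempty ι] {v : ι → X → ℝ} {B : ℝ}
    (hB : ∀ i x, B ≤ v i x) (hc : BddBelow (range c)) (hv : ∀ i, IsWeakKAM c c₀ (v i)) :
    IsWeakKAM c c₀ (fun x => ⨅ i, v i x) := by
  have hsol : ∀ i, (∀ z x, v i x ≤ v i z + c (z, x) + c₀) ∧
      ∀ x, ∀ ε > 0, ∃ z, v i z + c (z, x) + c₀ < v i x + ε := fun i =>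
    (isWeakKAM_iff ⟨B, by rintro _ ⟨x, rfl⟩; exact hB i x⟩ hc).1 (hv i)
  have hbdd : ∀ x, BddBelow (range fun i => v i x) := fun x =>
    ⟨B, by rintro _ ⟨i, rfl⟩; exact hB i x⟩
  refine (isWeakKAM_iff ⟨B, ?_⟩ hc).2 ⟨fun z x => ?_, fun x ε hε => ?_⟩
  · rintro _ ⟨x, rfl⟩
    exact le_ciInf fun i => hB i x
  · have : (⨅ i, v i x) - c (z, x) - c₀ ≤ ⨅ i, v i z := le_ciInf fun i => by
      linarith [ciInf_le (hbdd x) i, (hsol i).1 z x]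
    linarith
  · obtain ⟨i, hi⟩ := exists_lt_of_ciInf_lt (lt_add_of_pos_right (⨅ i, v i x) (half_pos hε))
    obtain ⟨z, hz⟩ := (hsol i).2 x _ (half_pos hε)
    exact ⟨z, by linarith [ciInf_le (hbdd z) i]⟩

end WeakKAM

section Action

variable {X : Type*} {c : X × X → ℝ} {c₀ : ℝ}

noncomputable def chainAction (c : X × X → ℝ) (c₀ : ℝ) (n : ℕ) (x y : X) : ℝ :=
  chainCost c n x y + n * c₀

theorem exists_chainAction_succ_le {w : X → ℝ} (hc : BddBelow (range c))
    (hcal : ∀ y, ∀ η > 0, ∃ u, w u + c (u, y) + c₀ < w y + η) (n : ℕ) (y : X) {η : ℝ}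
    (hη : 0 < η) : ∃ x, ∀ z, chainAction c c₀ (n + 1) z y ≤ c (z, x) + c₀ + w y - w x + η := by
  induction n generalizing y η with
  | zero =>
    refine ⟨y, fun z => ?_⟩
    have := chainCost_succ_le_chainSum_add hc (q := fun _ => z) (n := 0) rfl rfl y
    simp only [chainSum_zero, zero_add] at this
    simp only [chainAction, zero_add, Nat.cast_one, one_mul]
    linarith
  | succ n ih =>
    obtain ⟨u, hu⟩ := hcal y (η / 2) (half_pos hη)
    obtain ⟨x, hx⟩ := ih u (half_pos hη)
    refine ⟨x, fun z => ?_⟩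
    have := chainCost_succ_le hc n.succ_ne_zero z u y
    have := hx z
    simp only [chainAction] at *
    push_cast at *
    linarith

theorem IsWeakKAM.exists_abs_chainAction_le {w : X → ℝ} {M K : ℝ} (hw : IsWeakKAM c c₀ w)
    (hwM : ∀ x, |w x| ≤ M) (hK : ∀ p, |c p| ≤ K) :
    ∃ B, ∀ n x y, |chainAction c c₀ n x y| ≤ B := by
  have hc : BddBelow (range c) := ⟨-K, by rintro _ ⟨p, rfl⟩; exact (abs_le.1 (hK p)).1⟩
  have hwb : BddBelow (range w) := ⟨-M, by rintro _ ⟨x, rfl⟩; exact (abs_le.1 (hwM x)).1⟩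
  obtain ⟨hdom, hcal⟩ := (isWeakKAM_iff hwb hc).1 hw
  refine ⟨2 * M + K + |c₀| + 1, fun n x y => ?_⟩
  have hM : 0 ≤ M := (abs_nonneg _).trans (hwM x)
  have hK₀ : 0 ≤ K := (abs_nonneg _).trans (hK (x, y))
  rcases n with _ | n
  · simp [chainAction, chainCost_zero]
    linarith [abs_nonneg c₀]
  obtain ⟨z, hz⟩ := exists_chainAction_succ_le hc hcal n y one_pos
  have hup := hz x
  have hlow := sub_le_chainCost hdom n.succ_ne_zero x y
  obtain ⟨hwx, hwx'⟩ := abs_le.1 (hwM x)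
  obtain ⟨hwy, hwy'⟩ := abs_le.1 (hwM y)
  obtain ⟨hwz, hwz'⟩ := abs_le.1 (hwM z)
  obtain ⟨hcxz, hcxz'⟩ := abs_le.1 (hK (x, z))
  unfold chainAction at *
  rw [abs_le]
  constructor <;> linarith [le_abs_self c₀, neg_abs_le c₀]

end Action

theorem isBoundedUnder_ge_of_abs_le {u : ℕ → ℝ} {B : ℝ} (h : ∀ n, |u n| ≤ B) :
    IsBoundedUnder (· ≥ ·) atTop u :=
  isBoundedUnder_of ⟨-B, fun n => (abs_le.1 (h n)).1⟩

theorem isCoboundedUnder_ge_of_abs_le {u : ℕ → ℝ} {B : ℝ} (h : ∀ n, |u n| ≤ B) :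
    IsCoboundedUnder (· ≥ ·) atTop u :=
  isCoboundedUnder_ge_of_le atTop fun n => (abs_le.1 (h n)).2

theorem abs_liminf_le {u : ℕ → ℝ} {B : ℝ} (h : ∀ n, |u n| ≤ B) : |liminf u atTop| ≤ B :=
  abs_le.2 ⟨le_liminf_of_le (isCoboundedUnder_ge_of_abs_le h)
      (Eventually.of_forall fun n => (abs_le.1 (h n)).1),
    liminf_le_of_frequently_le (Frequently.of_forall fun n => (abs_le.1 (h n)).2)
      (isBoundedUnder_ge_of_abs_le h)⟩

theorem exists_liminf_add_le_liminf {X : Type*} [TopologicalSpace X] [CompactSpace X]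
    {F : ℕ → X → ℝ} {φ : X → ℝ} {m : ℕ → ℝ} {B : ℝ} (hF : Equicontinuous F)
    (hφ : Continuous φ) (hFB : ∀ n z, B ≤ F n z) (hm : IsCoboundedUnder (· ≥ ·) atTop m)
    (hFm : ∀ n, ∀ ε > 0, ∃ z, F n z + φ z < m n + ε) :
    ∃ z, liminf (fun n => F n z) atTop + φ z ≤ liminf m atTop := by
  set L := liminf m atTop
  have hnear : ∀ k : ℕ, ∃ n, k ≤ n ∧ ∃ z, F n z + φ z < L + 1 / (k + 1) + 1 / (k + 1) := by
    intro k
    have hk : (0 : ℝ) < 1 / (k + 1) := Nat.one_div_pos_of_nat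
    obtain ⟨n, hkn, hmn⟩ :=
      frequently_atTop.1 (frequently_lt_of_liminf_lt hm (lt_add_of_pos_right L hk)) k
    obtain ⟨z, hz⟩ := hFm n _ hk
    exact ⟨n, hkn, z, by linarith⟩
  choose n hkn z hz using hnear
  obtain ⟨z₀, hz₀⟩ := exists_clusterPt_of_compactSpace (map z atTop)
  refine ⟨z₀, ?_⟩
  suffices h : ∀ ε > 0, liminf (fun n => F n z₀) atTop ≤ L - φ z₀ + ε by
    linarith [le_of_forall_pos_le_add h]
  intro ε hε
  refine liminf_le_of_frequently_le ?_ (isBoundedUnder_of ⟨B, fun n => hFB n z₀⟩)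
  have hclose : ∀ᶠ z' in 𝓝 z₀, (∀ n, dist (F n z₀) (F n z') < ε / 3) ∧
      dist (φ z') (φ z₀) < ε / 3 :=
    (Metric.equicontinuousAt_iff_right.1 (hF z₀) _ (by positivity)).and
      (Metric.tendsto_nhds.1 (hφ.tendsto z₀) _ (by positivity))
  have hsmall : ∀ᶠ k : ℕ in atTop, 1 / ((k : ℝ) + 1) < ε / 6 :=
    tendsto_one_div_add_atTop_nhds_zero_nat.eventually (gt_mem_nhds (by positivity))
  refine (tendsto_atTop_mono hkn tendsto_id).frequently
    (((mapClusterPt_iff_frequently.1 hz₀ _ hclose).and_eventually hsmall).mono ?_)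
  rintro k ⟨⟨hF_close, hφ_close⟩, hk⟩
  have h1 := (abs_lt.1 (hF_close (n k))).2
  have h2 := (abs_lt.1 hφ_close).1
  linarith [hz k]

section Peierls

variable {X : Type*} {c : X × X → ℝ} {c₀ : ℝ} {B : ℝ}

theorem peierls_eq_liminf_add (c : X × X → ℝ) (c₀ : ℝ) (x y : X) (k : ℕ) :
    peierls c c₀ x y = liminf (fun n => chainAction c c₀ (n + k) x y) atTop :=
  (liminf_nat_add (fun n => chainAction c c₀ n x y) k).symm

theorem abs_peierls_le (hB : ∀ n x y, |chainAction c c₀ n x y| ≤ B) (x y : X) :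
    |peierls c c₀ x y| ≤ B :=
  abs_liminf_le fun n => hB n x y

theorem peierls_le_add (hc : BddBelow (range c)) (hB : ∀ n x y, |chainAction c c₀ n x y| ≤ B)
    (y z x : X) : peierls c c₀ y x ≤ peierls c c₀ y z + c (z, x) + c₀ := by
  have hle : ∀ᶠ n in atTop,
      chainAction c c₀ (n + 1) y x ≤ chainAction c c₀ n y z + (c (z, x) + c₀) := by
    filter_upwards [eventually_ne_atTop 0] with n hn
    have := chainCost_succ_le hc hn y z x
    simp only [chainAction]
    push_cast
    linarith
  calc peierls c c₀ y x = liminf (fun n => chainAction c c₀ (n + 1) y x) atTop :=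
        peierls_eq_liminf_add c c₀ y x 1
    _ ≤ liminf (fun n => chainAction c c₀ n y z + (c (z, x) + c₀)) atTop :=
        liminf_le_liminf hle (isBoundedUnder_ge_of_abs_le fun n => hB (n + 1) y x)
          (isCoboundedUnder_ge_of_le atTop (x := B + (c (z, x) + c₀)) fun n => by
            linarith [(abs_le.1 (hB n y z)).2])
    _ = peierls c c₀ y z + (c (z, x) + c₀) :=
        liminf_add_const _ _ _ (isCoboundedUnder_ge_of_abs_le fun n => hB n y z)
          (isBoundedUnder_ge_of_abs_le fun n => hB n y z)
    _ = peierls c c₀ y z + c (z, x) + c₀ := by ring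

end Peierls

section Compact

variable {X : Type*} [MetricSpace X] {c : X × X → ℝ} {c₀ : ℝ} {B : ℝ}

theorem uniformEquicontinuous_chainAction_succ (hc : UniformContinuous c)
    (hcb : BddBelow (range c)) (c₀ : ℝ) (x : X) :
    UniformEquicontinuous fun n z => chainAction c c₀ (n + 1) x z := by
  rw [Metric.uniformEquicontinuous_iff]
  intro ε hε
  obtain ⟨δ, hδ, hcδ⟩ := Metric.uniformContinuous_iff.1 hc (ε / 2) (half_pos hε)
  refine ⟨δ, hδ, fun z z' hzz' n => ?_⟩
  have hclose : ∀ p, |c (p, z) - c (p, z')| < ε / 2 := fun p =>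
    hcδ (by simpa [Prod.dist_eq] using hzz')
  have h1 := chainCost_succ_le_of_forall_le_add hcb
    (fun p => by linarith [(abs_lt.1 (hclose p)).2] : ∀ p, c (p, z) ≤ c (p, z') + ε / 2) n x
  have h2 := chainCost_succ_le_of_forall_le_add hcb
    (fun p => by linarith [(abs_lt.1 (hclose p)).1] : ∀ p, c (p, z') ≤ c (p, z) + ε / 2) n x
  rw [Real.dist_eq, chainAction, chainAction, add_sub_add_right_eq_sub, abs_lt]
  constructor <;> linarith

theorem exists_peierls_add_le [CompactSpace X] (hc : Continuous c)
    (hB : ∀ n x y, |chainAction c c₀ n x y| ≤ B) (y x : X) :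
    ∃ z, peierls c c₀ y z + c (z, x) + c₀ ≤ peierls c c₀ y x := by
  have hcb : BddBelow (range c) := (isCompact_range hc).bddBelow
  obtain ⟨z, hz⟩ := exists_liminf_add_le_liminf
    (F := fun n z => chainAction c c₀ (n + 1) y z) (φ := fun z => c (z, x) + c₀)
    (m := fun n => chainAction c c₀ (n + 2) y x) (B := -B)
    (uniformEquicontinuous_chainAction_succ (CompactSpace.uniformContinuous_of_continuous hc)
      hcb c₀ y).equicontinuous (by fun_prop) (fun n z => (abs_le.1 (hB (n + 1) y z)).1)
    (isCoboundedUnder_ge_of_abs_le fun n => hB (n + 2) y x) fun n ε hε => by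
      obtain ⟨z, hz⟩ := exists_chainCost_add_lt_chainCost_succ hcb (n + 1) y x hε
      refine ⟨z, ?_⟩
      simp only [chainAction]
      push_cast
      linarith
  refine ⟨z, ?_⟩
  rw [peierls_eq_liminf_add c c₀ y z 1, peierls_eq_liminf_add c c₀ y x 2]
  linarith

theorem isWeakKAM_peierls [CompactSpace X] (hc : Continuous c)
    (hB : ∀ n x y, |chainAction c c₀ n x y| ≤ B) (y : X) :
    IsWeakKAM c c₀ (peierls c c₀ y) := by
  have hcb : BddBelow (range c) := (isCompact_range hc).bddBelow
  refine (isWeakKAM_iff ⟨-B, ?_⟩ hcb).2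
    ⟨fun z x => peierls_le_add hcb hB y z x, fun x ε hε => ?_⟩
  · rintro _ ⟨x, rfl⟩
    exact (abs_le.1 (abs_peierls_le hB y x)).1
  · obtain ⟨z, hz⟩ := exists_peierls_add_le hc hB y x
    exact ⟨z, by linarith⟩

end Compact

theorem stmt16_general {X : Type*} [MetricSpace X] [CompactSpace X]
    (c : X × X → ℝ) (hc : Continuous c) (c₀ : ℝ)
    (hcrit : ∃ w : X → ℝ, (∃ M, ∀ x, |w x| ≤ M) ∧ ∀ x, w x = Tminus c w x + c₀)
    (hA : (aubry c c₀).Nonempty)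
    (f : X → ℝ)
    (hf : ∀ x ∈ aubry c c₀, ∀ y ∈ aubry c c₀, f y - f x ≤ peierls c c₀ x y) :
    letI u : X → ℝ := fun x => ⨅ y : aubry c c₀, (f y.1 + peierls c c₀ y.1 x)
    (∀ x : X, u x = Tminus c u x + c₀) ∧ ∀ x ∈ aubry c c₀, u x = f x := by
  obtain ⟨w, ⟨M, hwM⟩, hw⟩ := hcrit
  obtain ⟨K, hK⟩ : ∃ K, ∀ p, |c p| ≤ K := by
    simpa using isCompact_univ.exists_bound_of_continuousOn hc.continuousOn
  obtain ⟨B, hB⟩ := IsWeakKAM.exists_abs_chainAction_le hw hwM hK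
  have hcb : BddBelow (range c) := (isCompact_range hc).bddBelow
  have hpB : ∀ x y, |peierls c c₀ x y| ≤ B := abs_peierls_le hB
  obtain ⟨x₀, hx₀⟩ := hA
  have : Nonempty (aubry c c₀) := ⟨⟨x₀, hx₀⟩⟩
  have hlow : ∀ (y : aubry c c₀) x, f x₀ - B - B ≤ f y + peierls c c₀ y x := fun y x => by
    linarith [hf y y.2 x₀ hx₀, (abs_le.1 (hpB y x₀)).2, (abs_le.1 (hpB y x)).1]
  refine ⟨isWeakKAM_iInf hlow hcb fun y =>
    (isWeakKAM_peierls hc hB y).const_add ⟨-B, ?_⟩ hcb _, fun x hx => ?_⟩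
  · rintro _ ⟨x, rfl⟩
    exact (abs_le.1 (hpB y x)).1
  · refine le_antisymm ?_ (le_ciInf fun y => ?_)
    · have h := ciInf_le ⟨_, by rintro _ ⟨y, rfl⟩; exact hlow y x⟩ (⟨x, hx⟩ : aubry c c₀)
      rwa [show peierls c c₀ x x = 0 from hx, add_zero] at h
    · linarith [hf y y.2 x hx]

theorem stmt16 {X : Type*} [MetricSpace X] [CompactSpace X] [Nonempty X]
    (c : X × X → ℝ) (hc : Continuous c) (c₀ : ℝ)
    (hcrit : ∃ w : X → ℝ, (∃ M, ∀ x, |w x| ≤ M) ∧ ∀ x, w x = Tminus c w x + c₀)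
    (hA : (aubry c c₀).Nonempty)
    (f : X → ℝ)
    (hf : ∀ x ∈ aubry c c₀, ∀ y ∈ aubry c c₀, f y - f x ≤ peierls c c₀ x y) :
    letI u : X → ℝ := fun x => ⨅ y : aubry c c₀, (f y.1 + peierls c c₀ y.1 x)
    (∀ x : X, u x = Tminus c u x + c₀) ∧ ∀ x ∈ aubry c c₀, u x = f x :=
  stmt16_general c hc c₀ hcrit hA f hf
end
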